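/- arXiv:1811.03184 — 5 statements merged into one kernel-verified Lean document; each statement's English description precedes it below -/
import Mathlib

section
/- Let Q, P : ℝ → M_n(ℝ) be differentiable matrix-valued curves, and suppose they satisfy the symmetric representation of the generalized rigid body equations: Q̇(t) = Q(t)·Ω(t) and Ṗ(t) = P(t)·Ω(t), where Ω(t) = 𝓘⁻¹(Q(t)ᵀP(t) − P(t)ᵀQ(t)). Then the curve Π(t) := Q(t)ᵀP(t) − P(t)ᵀQ(t) satisfies the n-dimensional Euler equation Π̇(t) = Π(t)·Ω(t) − Ω(t)·Π(t). -/
open Matrix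

/-!
Differentiating `Π = QᵀP − PᵀQ` with the product rule and substituting `Q̇ = QΩ`, `Ṗ = PΩ` gives
`ΩᵀQᵀP + QᵀPΩ − ΩᵀPᵀQ − PᵀQΩ`, which is `ΠΩ − ΩΠ` as soon as `Ωᵀ = −Ω`.
-/

namespace Matrix

variable {𝕜 𝔸 : Type*} [NontriviallyNormedField 𝕜] [NormedRing 𝔸] [NormedAlgebra 𝕜 𝔸]
  {l m n : Type*}

/-- Matrices carry no canonical norm, so curves of matrices are differentiated entrywise. -/
def HasEntrywiseDerivAt (A : 𝕜 → Matrix m n 𝔸) (A' : Matrix m n 𝔸) (t : 𝕜) : Prop :=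
  ∀ i j, HasDerivAt (fun s => A s i j) (A' i j) t

namespace HasEntrywiseDerivAt

variable {A B : 𝕜 → Matrix m n 𝔸} {A' B' : Matrix m n 𝔸} {t : 𝕜}

theorem transpose (hA : HasEntrywiseDerivAt A A' t) :
    HasEntrywiseDerivAt (fun s => (A s)ᵀ) A'ᵀ t :=
  fun i j => hA j i

theorem sub (hA : HasEntrywiseDerivAt A A' t) (hB : HasEntrywiseDerivAt B B' t) :
    HasEntrywiseDerivAt (fun s => A s - B s) (A' - B') t :=
  fun i j => (hA i j).sub (hB i j)

theorem mul [Fintype n] {C : 𝕜 → Matrix n l 𝔸} {C' : Matrix n l 𝔸}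
    (hA : HasEntrywiseDerivAt A A' t) (hC : HasEntrywiseDerivAt C C' t) :
    HasEntrywiseDerivAt (fun s => A s * C s) (A' * C t + A t * C') t := by
  intro i j
  simp only [add_apply, mul_apply, ← Finset.sum_add_distrib]
  exact HasDerivAt.fun_sum fun k _ => (hA i k).mul (hC k j)

end HasEntrywiseDerivAt

theorem transpose_mul_sub_transpose_mul_variation_of_skew {R : Type*} [CommRing R] [Fintype m]
    [Fintype n] (Q P : Matrix m n R) (Ω : Matrix n n R) (hΩ : Ωᵀ = -Ω) :
    ((Q * Ω)ᵀ * P + Qᵀ * (P * Ω)) - ((P * Ω)ᵀ * Q + Pᵀ * (Q * Ω)) =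
      (Qᵀ * P - Pᵀ * Q) * Ω - Ω * (Qᵀ * P - Pᵀ * Q) := by
  rw [transpose_mul, transpose_mul, hΩ]
  simp only [Matrix.neg_mul, Matrix.mul_assoc, Matrix.mul_sub, Matrix.sub_mul]
  abel

end Matrix

theorem symmetric_representation_implies_euler_general
    {n : ℕ}
    (Q P Ω : ℝ → Matrix (Fin n) (Fin n) ℝ)
    (hΩskew : ∀ t : ℝ, (Ω t)ᵀ = -(Ω t))
    (hQ : ∀ (t : ℝ) (i j : Fin n), HasDerivAt (fun s => Q s i j) ((Q t * Ω t) i j) t)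
    (hP : ∀ (t : ℝ) (i j : Fin n), HasDerivAt (fun s => P s i j) ((P t * Ω t) i j) t) :
    ∀ (t : ℝ) (i j : Fin n),
      HasDerivAt (fun s => ((Q s)ᵀ * P s - (P s)ᵀ * Q s) i j)
        ((((Q t)ᵀ * P t - (P t)ᵀ * Q t) * Ω t
          - Ω t * ((Q t)ᵀ * P t - (P t)ᵀ * Q t)) i j) t := by
  intro t
  have hQ' : HasEntrywiseDerivAt Q (Q t * Ω t) t := hQ t
  have hP' : HasEntrywiseDerivAt P (P t * Ω t) t := hP t
  have hEuler := (hQ'.transpose.mul hP').sub (hP'.transpose.mul hQ')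
  rwa [transpose_mul_sub_transpose_mul_variation_of_skew _ _ _ (hΩskew t)] at hEuler

/-- If differentiable curves `Q, P : ℝ → Mₙ(ℝ)` satisfy the symmetric
representation `Q̇ = QΩ`, `Ṗ = PΩ` with `Ω(t)` skew-symmetric and `𝓘(Ω(t)) = QᵀP − PᵀQ`
(i.e. `Ω(t) = 𝓘⁻¹(QᵀP − PᵀQ)`, where `𝓘(Ω) = ΛΩ + ΩΛ`), then
`Π(t) := Q(t)ᵀP(t) − P(t)ᵀQ(t)` satisfies the Euler equation `Π̇ = ΠΩ − ΩΠ`. -/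
theorem symmetric_representation_implies_euler
    {n : ℕ} (Λ : Fin n → ℝ) (hΛ : ∀ i j : Fin n, i ≠ j → 0 < Λ i + Λ j)
    (Q P Ω : ℝ → Matrix (Fin n) (Fin n) ℝ)
    (hΩskew : ∀ t : ℝ, (Ω t)ᵀ = -(Ω t))
    (hΩ : ∀ t : ℝ,
      Matrix.diagonal Λ * Ω t + Ω t * Matrix.diagonal Λ = (Q t)ᵀ * P t - (P t)ᵀ * Q t)
    (hQ : ∀ (t : ℝ) (i j : Fin n), HasDerivAt (fun s => Q s i j) ((Q t * Ω t) i j) t)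
    (hP : ∀ (t : ℝ) (i j : Fin n), HasDerivAt (fun s => P s i j) ((P t * Ω t) i j) t) :
    ∀ (t : ℝ) (i j : Fin n),
      HasDerivAt (fun s => ((Q s)ᵀ * P s - (P s)ᵀ * Q s) i j)
        ((((Q t)ᵀ * P t - (P t)ᵀ * Q t) * Ω t
          - Ω t * ((Q t)ᵀ * P t - (P t)ᵀ * Q t)) i j) t :=
  symmetric_representation_implies_euler_general Q P Ω hΩskew hQ hP
end

section
/- Let Z : ℝ → M_{2n×n}(ℝ) be a differentiable curve satisfying Ż(t) = Z(t)·Ω(t) where Ω(t) ∈ M_n(ℝ) is skew-symmetric for every t (in particular this holds for solutions of the symmetric representation, where Ω(t) = 𝓘⁻¹(Z(t)ᵀ𝕁Z(t))). Then 𝐉(Z(t)) = 𝕁Z(t)Z(t)ᵀ is constant in t; equivalently, writing Z = [Q; P] in n×n blocks, the matrices Q(t)Q(t)ᵀ, P(t)P(t)ᵀ, and P(t)Q(t)ᵀ are all constant in t. -/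
/-! If `Ż = ZΩ` with `Ω` skew, then `d/dt (ZZᵀ) = ZΩZᵀ + ZΩᵀZᵀ = 0`, so `ZZᵀ` is constant,
and hence so is `𝕁ZZᵀ`. -/

open Matrix

/-- The standard symplectic matrix `𝕁 = [[0, I], [−I, 0]]` of size `2n × 2n`. -/
def symplJ (n : ℕ) : Matrix (Fin n ⊕ Fin n) (Fin n ⊕ Fin n) ℝ :=
  Matrix.fromBlocks 0 1 (-1) 0

section

variable {m n : Type*} [Fintype n]

theorem Matrix.mul_mul_transpose_add_mul_transpose_eq_zero {R : Type*} [CommRing R]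
    (A : Matrix m n R) {Ω : Matrix n n R} (hΩ : Ωᵀ = -Ω) :
    A * Ω * Aᵀ + A * (A * Ω)ᵀ = 0 := by
  rw [transpose_mul, hΩ, Matrix.mul_assoc, Matrix.neg_mul, Matrix.mul_neg, add_neg_cancel]

theorem Matrix.hasDerivAt_mul_transpose_apply {Z : ℝ → Matrix m n ℝ} {Z' : Matrix m n ℝ} {t : ℝ}
    (hZ : ∀ i j, HasDerivAt (fun s => Z s i j) (Z' i j) t) (i j : m) :
    HasDerivAt (fun s => (Z s * (Z s)ᵀ) i j) ((Z' * (Z t)ᵀ + Z t * Z'ᵀ) i j) t := by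
  simp only [mul_apply, transpose_apply, add_apply, ← Finset.sum_add_distrib]
  exact HasDerivAt.fun_sum fun k _ => (hZ i k).mul (hZ j k)

theorem Matrix.mul_transpose_eq_of_hasDerivAt_mul_skew {Z : ℝ → Matrix m n ℝ}
    {Ω : ℝ → Matrix n n ℝ} (hΩ : ∀ t, (Ω t)ᵀ = -(Ω t))
    (hZ : ∀ t i j, HasDerivAt (fun s => Z s i j) ((Z t * Ω t) i j) t) (t₀ t : ℝ) :
    Z t * (Z t)ᵀ = Z t₀ * (Z t₀)ᵀ := by
  ext i j
  have hderiv : ∀ s, HasDerivAt (fun u => (Z u * (Z u)ᵀ) i j) 0 s := fun s => by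
    simpa only [mul_mul_transpose_add_mul_transpose_eq_zero (Z s) (hΩ s), zero_apply] using
      hasDerivAt_mul_transpose_apply (hZ s) i j
  exact is_const_of_deriv_eq_zero (fun s => (hderiv s).differentiableAt)
    (fun s => (hderiv s).deriv) t t₀

end

/-- If a differentiable curve `Z : ℝ → M_{2n×n}(ℝ)` satisfies
`Ż(t) = Z(t)·Ω(t)` with `Ω(t)` skew-symmetric for all `t`, then the momentum map
`𝐉(Z(t)) = 𝕁Z(t)Z(t)ᵀ` is constant in `t`; equivalently `Z(t)Z(t)ᵀ` is constant in `t`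
(so that, in blocks `Z = [Q; P]`, the matrices `QQᵀ`, `PPᵀ`, and `PQᵀ` are constant). -/
theorem momentum_map_J_conserved
    {n : ℕ} (Z : ℝ → Matrix (Fin n ⊕ Fin n) (Fin n) ℝ)
    (Ω : ℝ → Matrix (Fin n) (Fin n) ℝ)
    (hΩskew : ∀ t : ℝ, (Ω t)ᵀ = -(Ω t))
    (hZ : ∀ (t : ℝ) (i : Fin n ⊕ Fin n) (j : Fin n),
      HasDerivAt (fun s => Z s i j) ((Z t * Ω t) i j) t) :
    (∀ t : ℝ, symplJ n * Z t * (Z t)ᵀ = symplJ n * Z 0 * (Z 0)ᵀ) ∧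
    (∀ t : ℝ, Z t * (Z t)ᵀ = Z 0 * (Z 0)ᵀ) := by
  have hconst := mul_transpose_eq_of_hasDerivAt_mul_skew hΩskew hZ 0
  refine ⟨fun t => ?_, hconst⟩
  rw [Matrix.mul_assoc, hconst t, Matrix.mul_assoc]
end

section
/- Let Z₁, Z₂ ∈ M_{2n×n}(ℝ) both have rank n, and suppose 𝐉(Z₁) = 𝐉(Z₂), i.e. 𝕁Z₁Z₁ᵀ = 𝕁Z₂Z₂ᵀ (equivalently Z₁Z₁ᵀ = Z₂Z₂ᵀ). Then there exists R ∈ O(n) such that Z₂ = Z₁R. That is, each level set of the momentum map 𝐉 restricted to the full-rank matrices is a single O(n)-orbit. -/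
/-!
Since `𝕁` is invertible, `𝐉(Z₁) = 𝐉(Z₂)` means `Z₁Z₁ᴴ = Z₂Z₂ᴴ`. Then `BZ₁ = 0 ↔ BZ₂ = 0` for
every `B`, because `BZZᴴ = 0` forces `BZ = 0`. When `Z₁` has full column rank its Gram matrix
`G = Z₁ᴴZ₁` is invertible, and `R = G⁻¹Z₁ᴴZ₂` works: `RRᴴ = G⁻¹Z₁ᴴZ₁Z₁ᴴZ₁G⁻¹ = 1`, and
`Z₁R = Z₂` because `Z₁G⁻¹Z₁ᴴ - 1` kills `Z₁`, hence also `Z₂`.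
-/

open Matrix

theorem symplJ_mul_symplJ (n : ℕ) : symplJ n * symplJ n = -1 := by
  simp [symplJ, fromBlocks_multiply, ← fromBlocks_one, fromBlocks_neg]

theorem isUnit_symplJ (n : ℕ) : IsUnit (symplJ n) :=
  IsUnit.of_mul_eq_one (-symplJ n) (by rw [Matrix.mul_neg, symplJ_mul_symplJ, neg_neg])

namespace Matrix

variable {m n K : Type*} [Fintype m] [Fintype n] [Field K]

theorem isUnit_of_rank_eq_card [DecidableEq n] {A : Matrix n n K}
    (h : A.rank = Fintype.card n) : IsUnit A := by
  refine mulVec_surjective_iff_isUnit.mp (LinearMap.range_eq_top (f := A.mulVecLin).mp ?_)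
  apply Submodule.eq_top_of_finrank_eq
  rw [← rank, h, Module.finrank_fintype_fun_eq_card]

variable [PartialOrder K] [StarRing K] [StarOrderedRing K]

theorem isUnit_conjTranspose_mul_self_of_rank_eq [DecidableEq n] {Z : Matrix m n K}
    (h : Z.rank = Fintype.card n) : IsUnit (Zᴴ * Z) :=
  isUnit_of_rank_eq_card (by rw [rank_conjTranspose_mul_self, h])

theorem mul_eq_zero_iff_of_mul_conjTranspose_eq {p : Type*} {Z₁ Z₂ : Matrix m n K}
    (h : Z₁ * Z₁ᴴ = Z₂ * Z₂ᴴ) (B : Matrix p m K) : B * Z₁ = 0 ↔ B * Z₂ = 0 := by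
  rw [← mul_self_mul_conjTranspose_eq_zero, h, mul_self_mul_conjTranspose_eq_zero]

theorem exists_mem_unitaryGroup_of_mul_conjTranspose_eq [DecidableEq n]
    {Z₁ Z₂ : Matrix m n K} (h₁ : Z₁.rank = Fintype.card n) (h : Z₁ * Z₁ᴴ = Z₂ * Z₂ᴴ) :
    ∃ R ∈ unitaryGroup n K, Z₂ = Z₁ * R := by
  classical
  set G := Z₁ᴴ * Z₁ with hG
  have hGdet : IsUnit G.det :=
    (isUnit_iff_isUnit_det G).mp (isUnit_conjTranspose_mul_self_of_rank_eq h₁)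
  have hGinv : (G⁻¹)ᴴ = G⁻¹ := by
    rw [conjTranspose_nonsing_inv, hG, conjTranspose_mul, conjTranspose_conjTranspose]
  refine ⟨G⁻¹ * Z₁ᴴ * Z₂, ?_, ?_⟩
  · rw [mem_unitaryGroup_iff, star_eq_conjTranspose]
    calc G⁻¹ * Z₁ᴴ * Z₂ * (G⁻¹ * Z₁ᴴ * Z₂)ᴴ
        = G⁻¹ * Z₁ᴴ * (Z₂ * Z₂ᴴ) * Z₁ * (G⁻¹)ᴴ := by
          simp only [conjTranspose_mul, conjTranspose_conjTranspose, Matrix.mul_assoc]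
      _ = G⁻¹ * G * (G * G⁻¹) := by
          rw [← h, hGinv, hG]; simp only [Matrix.mul_assoc]
      _ = 1 := by rw [nonsing_inv_mul _ hGdet, mul_nonsing_inv _ hGdet, Matrix.one_mul]
  · have hZ₁ : (Z₁ * G⁻¹ * Z₁ᴴ - 1) * Z₁ = 0 := by
      rw [Matrix.sub_mul, Matrix.one_mul, Matrix.mul_assoc, ← hG, Matrix.mul_assoc,
        nonsing_inv_mul _ hGdet, Matrix.mul_one, sub_self]
    have hZ₂ := (mul_eq_zero_iff_of_mul_conjTranspose_eq h _).mp hZ₁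
    rw [Matrix.sub_mul, Matrix.one_mul, sub_eq_zero] at hZ₂
    simpa only [Matrix.mul_assoc] using hZ₂.symm

end Matrix

theorem J_level_set_is_orthogonal_orbit_general
    {n : ℕ} (Z₁ Z₂ : Matrix (Fin n ⊕ Fin n) (Fin n) ℝ)
    (h₁ : Z₁.rank = n)
    (hJ : symplJ n * Z₁ * Z₁ᵀ = symplJ n * Z₂ * Z₂ᵀ) :
    ∃ R : Matrix (Fin n) (Fin n) ℝ, Rᵀ * R = 1 ∧ Z₂ = Z₁ * R := by
  have hZ : Z₁ * Z₁ᴴ = Z₂ * Z₂ᴴ := by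
    simp only [conjTranspose_eq_transpose_of_trivial]
    exact (isUnit_symplJ n).mul_left_cancel (by simpa only [Matrix.mul_assoc] using hJ)
  obtain ⟨R, hR, hZ₂⟩ :=
    exists_mem_unitaryGroup_of_mul_conjTranspose_eq (by rwa [Fintype.card_fin]) hZ
  refine ⟨R, ?_, hZ₂⟩
  simpa only [star_eq_conjTranspose, conjTranspose_eq_transpose_of_trivial] using
    (mem_unitaryGroup_iff' (A := R)).mp hR

/-- If `Z₁, Z₂ ∈ M_{2n×n}(ℝ)` both have full rank `n` and
`𝐉(Z₁) = 𝐉(Z₂)`, i.e. `𝕁Z₁Z₁ᵀ = 𝕁Z₂Z₂ᵀ`, then `Z₂ = Z₁R` for some `R ∈ O(n)`: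
each level set of `𝐉` on full-rank matrices is a single `O(n)`-orbit. -/
theorem J_level_set_is_orthogonal_orbit
    {n : ℕ} (Z₁ Z₂ : Matrix (Fin n ⊕ Fin n) (Fin n) ℝ)
    (h₁ : Z₁.rank = n) (h₂ : Z₂.rank = n)
    (hJ : symplJ n * Z₁ * Z₁ᵀ = symplJ n * Z₂ * Z₂ᵀ) :
    ∃ R : Matrix (Fin n) (Fin n) ℝ, Rᵀ * R = 1 ∧ Z₂ = Z₁ * R :=
  J_level_set_is_orthogonal_orbit_general Z₁ Z₂ h₁ hJ
end

section
/- Let Z₁, Z₂ ∈ M_{2n×n}(ℝ) both have rank n, and suppose 𝐌(Z₁) = 𝐌(Z₂), i.e. Z₁ᵀ𝕁Z₁ = Z₂ᵀ𝕁Z₂. Then there exists S ∈ Sp(2n,ℝ) such that Z₂ = SZ₁. That is, each level set of the momentum map 𝐌 restricted to the full-rank matrices is a single Sp(2n,ℝ)-orbit. -/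
/-!
Witt's extension theorem for the symplectic form `ω x y = xᵀ 𝕁 y` on `ℝ²ⁿ`. The columns of `Z₁`
and `Z₂` are linearly independent families with the same Gram matrix `Zᵀ 𝕁 Z`. Two such families
can be extended, one vector at a time, to bases with equal Gram matrices, and the change of basis
`S` is then symplectic. A new vector outside the span with prescribed pairings against the family
always exists: if the Gram matrix is singular, pair nontrivially with a vector of its radical;
otherwise take a nonzero vector of the orthogonal complement, which has dimension `2n - m > 0`.
-/

open Matrix

open Module Submodule

namespace LinearMap.BilinForm

variable {K V : Type*} [Field K] [AddCommGroup V] [Module K V] {ω : LinearMap.BilinForm K V}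

theorem exists_forall_apply_eq [FiniteDimensional K V] (hω : ω.Nondegenerate) {ι : Type*}
    {v : ι → V} (hv : LinearIndependent K v) (c : ι → K) : ∃ x, ∀ i, ω x (v i) = c i := by
  obtain ⟨φ, hφ⟩ := LinearMap.exists_extend ((Basis.span hv).constr K c)
  refine ⟨(ω.toDual hω).symm φ, fun i => ?_⟩
  rw [apply_toDual_symm_apply]
  have := LinearMap.congr_fun hφ (Basis.span hv i)
  rwa [LinearMap.comp_apply, Basis.constr_basis, subtype_apply, Basis.span_apply] at this

theorem notMem_span_of_apply_sum_eq_zero (hω : ω.IsRefl) {ι : Type*} [Fintype ι] {v : ι → V}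
    {c : ι → K} (hc : ∀ j, ω (∑ i, c i • v i) (v j) = 0) {x : V}
    (hx : ω x (∑ i, c i • v i) ≠ 0) : x ∉ span K (Set.range v) := by
  intro hx_mem
  have hspan : span K (Set.range v) ≤ LinearMap.ker (ω (∑ i, c i • v i)) :=
    span_le.2 (by rintro _ ⟨j, rfl⟩; exact hc j)
  exact hx (hω _ _ (hspan hx_mem))

theorem exists_notMem_span_forall_apply_eq_zero [FiniteDimensional K V] (hω : ω.IsRefl)
    (hnd : ω.Nondegenerate) {ι : Type*} [Fintype ι] {v : ι → V} (hv : LinearIndependent K v)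
    (hcard : Fintype.card ι < finrank K V)
    (hv_nd : ∀ c : ι → K, (∀ j, ω (∑ i, c i • v i) (v j) = 0) → c = 0) :
    ∃ x ∉ span K (Set.range v), ∀ i, ω x (v i) = 0 := by
  have hne : ω.orthogonal (span K (Set.range v)) ≠ ⊥ := by
    rw [Ne, ← Submodule.finrank_eq_zero, finrank_orthogonal hnd, finrank_span_eq_card hv]
    omega
  obtain ⟨x, hx_orth, hx0⟩ := Submodule.exists_mem_ne_zero_of_ne_bot hne
  have hx : ∀ i, ω x (v i) = 0 := fun i => hω _ _ (hx_orth _ (subset_span (Set.mem_range_self i)))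
  refine ⟨x, fun hx_mem => hx0 ?_, hx⟩
  obtain ⟨c, rfl⟩ := (mem_span_range_iff_exists_fun K).1 hx_mem
  simp [hv_nd c hx]

theorem exists_notMem_span_apply_eq [FiniteDimensional K V] (hω : ω.IsAlt)
    (hnd : ω.Nondegenerate) {ι : Type*} [Fintype ι] {v w : ι → V} (hv : LinearIndependent K v)
    (hw : LinearIndependent K w) (hcard : Fintype.card ι < finrank K V)
    (hvw : ∀ i j, ω (v i) (v j) = ω (w i) (w j)) :
    ∃ x y, x ∉ span K (Set.range v) ∧ y ∉ span K (Set.range w) ∧ ∀ i, ω x (v i) = ω y (w i) := by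
  have hsum : ∀ (c : ι → K) j, ω (∑ i, c i • v i) (v j) = ω (∑ i, c i • w i) (w j) := by
    simp [map_sum, hvw]
  by_cases hv_nd : ∀ c : ι → K, (∀ j, ω (∑ i, c i • v i) (v j) = 0) → c = 0
  · have hw_nd : ∀ c : ι → K, (∀ j, ω (∑ i, c i • w i) (w j) = 0) → c = 0 :=
      fun c hc => hv_nd c fun j => (hsum c j).trans (hc j)
    obtain ⟨x, hx, hx0⟩ := exists_notMem_span_forall_apply_eq_zero hω.isRefl hnd hv hcard hv_nd
    obtain ⟨y, hy, hy0⟩ := exists_notMem_span_forall_apply_eq_zero hω.isRefl hnd hw hcard hw_nd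
    exact ⟨x, y, hx, hy, fun i => (hx0 i).trans (hy0 i).symm⟩
  · classical
    push Not at hv_nd
    obtain ⟨c, hc, hc0⟩ := hv_nd
    obtain ⟨i₀, hi₀⟩ := Function.ne_iff.1 hc0
    obtain ⟨x, hx⟩ := exists_forall_apply_eq hnd hv (Pi.single i₀ 1)
    obtain ⟨y, hy⟩ := exists_forall_apply_eq hnd hw (Pi.single i₀ 1)
    have hx_sum : ω x (∑ i, c i • v i) ≠ 0 := by simpa [map_sum, hx, Pi.single_apply] using hi₀
    have hy_sum : ω y (∑ i, c i • w i) ≠ 0 := by simpa [map_sum, hy, Pi.single_apply] using hi₀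
    refine ⟨x, y, notMem_span_of_apply_sum_eq_zero hω.isRefl hc hx_sum,
      notMem_span_of_apply_sum_eq_zero hω.isRefl (fun j => (hsum c j).symm.trans (hc j)) hy_sum,
      fun i => by rw [hx, hy]⟩

theorem apply_snoc_eq_apply_snoc (hω : ω.IsAlt) {m : ℕ} {v w : Fin m → V} {x y : V}
    (hvw : ∀ i j, ω (v i) (v j) = ω (w i) (w j)) (hxy : ∀ i, ω x (v i) = ω y (w i))
    (i j : Fin (m + 1)) :
    ω ((Fin.snoc v x : Fin (m + 1) → V) i) ((Fin.snoc v x : Fin (m + 1) → V) j) =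
      ω ((Fin.snoc w y : Fin (m + 1) → V) i) ((Fin.snoc w y : Fin (m + 1) → V) j) := by
  have hyx : ∀ i, ω (v i) x = ω (w i) y := fun i => by
    rw [← hω.neg_eq x, ← hω.neg_eq y, hxy]
  induction i using Fin.lastCases <;> induction j using Fin.lastCases <;>
    simp [hω.self_eq_zero, hvw, hxy, hyx]

theorem comp_basis_equiv_eq_self {ι : Type*} (bv bw : Basis ι K V)
    (h : ∀ i j, ω (bv i) (bv j) = ω (bw i) (bw j)) :
    ω.comp (bv.equiv bw (Equiv.refl ι)) (bv.equiv bw (Equiv.refl ι)) = ω :=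
  ext_basis bv fun i j => by simp [h]

theorem exists_isometry_apply_eq [FiniteDimensional K V] (hω : ω.IsAlt) (hnd : ω.Nondegenerate)
    {m : ℕ} {v w : Fin m → V} (hv : LinearIndependent K v) (hw : LinearIndependent K w)
    (hvw : ∀ i j, ω (v i) (v j) = ω (w i) (w j)) :
    ∃ Φ : V ≃ₗ[K] V, ω.comp Φ Φ = ω ∧ ∀ i, Φ (v i) = w i := by
  obtain ⟨k, hk⟩ : ∃ k, finrank K V = m + k :=
    ⟨_, (Nat.add_sub_of_le (by simpa using hv.fintype_card_le_finrank)).symm⟩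
  induction k generalizing m with
  | zero =>
    have hcard : Fintype.card (Fin m) = finrank K V := by simpa using hk.symm
    let bv := basisOfLinearIndependentOfCardEqFinrank' v hv hcard
    let bw := basisOfLinearIndependentOfCardEqFinrank' w hw hcard
    refine ⟨bv.equiv bw (Equiv.refl _), comp_basis_equiv_eq_self bv bw ?_, fun i => ?_⟩
    · simpa [bv, bw] using hvw
    · simpa [bv, bw] using bv.equiv_apply i bw (Equiv.refl _)
  | succ k ih =>
    obtain ⟨x, y, hx, hy, hxy⟩ :=
      exists_notMem_span_apply_eq hω hnd hv hw (by simp; omega) hvw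
    obtain ⟨Φ, hΦ, hΦv⟩ := ih (linearIndependent_finSnoc.2 ⟨hv, hx⟩)
      (linearIndependent_finSnoc.2 ⟨hw, hy⟩) (apply_snoc_eq_apply_snoc hω hvw hxy) (by omega)
    exact ⟨Φ, hΦ, fun i => by simpa using hΦv i.castSucc⟩

theorem exists_isometry_comp_eq [FiniteDimensional K V] (hω : ω.IsAlt) (hnd : ω.Nondegenerate)
    {U : Type*} [AddCommGroup U] [Module K U] [FiniteDimensional K U] {f g : U →ₗ[K] V}
    (hf : Function.Injective f) (hg : Function.Injective g) (hfg : ω.comp f f = ω.comp g g) :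
    ∃ Φ : V ≃ₗ[K] V, ω.comp Φ Φ = ω ∧ Φ.toLinearMap ∘ₗ f = g := by
  let b := Module.finBasis K U
  obtain ⟨Φ, hΦ, hΦb⟩ := exists_isometry_apply_eq hω hnd
    (b.linearIndependent.map' f (LinearMap.ker_eq_bot.2 hf))
    (b.linearIndependent.map' g (LinearMap.ker_eq_bot.2 hg))
    (fun i j => by simpa using LinearMap.congr_fun₂ hfg (b i) (b j))
  exact ⟨Φ, hΦ, b.ext fun i => hΦb i⟩

end LinearMap.BilinForm

theorem Matrix.mulVec_injective_of_rank_eq {K m n : Type*} [Field K] [Fintype n]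
    {A : Matrix m n K} (hA : A.rank = Fintype.card n) : Function.Injective A.mulVec :=
  mulVec_injective_iff.2 <| linearIndependent_iff_card_eq_finrank_span.2 <| by
    rw [Set.finrank, ← rank_eq_finrank_span_cols, hA]

theorem symplJ_eq_neg_J (n : ℕ) : symplJ n = -J (Fin n) ℝ := by
  simp [symplJ, J, fromBlocks_neg]

theorem isAlt_toBilin'_symplJ (n : ℕ) : (symplJ n).toBilin'.IsAlt := by
  intro x
  rw [toBilin'_apply', ← Sum.elim_comp_inl_inr x, symplJ, fromBlocks_mulVec,
    sumElim_dotProduct_sumElim]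
  simp [dotProduct_comm, neg_mulVec]

theorem nondegenerate_toBilin'_symplJ (n : ℕ) : (symplJ n).toBilin'.Nondegenerate := by
  rw [nondegenerate_toBilin'_iff, symplJ_eq_neg_J]
  exact nondegenerate_of_det_ne_zero (by simp [det_neg, (isUnit_det_J (Fin n) ℝ).ne_zero])

/-- If `Z₁, Z₂ ∈ M_{2n×n}(ℝ)` both have full rank `n` and
`𝐌(Z₁) = 𝐌(Z₂)`, i.e. `Z₁ᵀ𝕁Z₁ = Z₂ᵀ𝕁Z₂`, then `Z₂ = SZ₁` for some `S ∈ Sp(2n,ℝ)`: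
each level set of `𝐌` on full-rank matrices is a single `Sp(2n,ℝ)`-orbit. -/
theorem M_level_set_is_symplectic_orbit
    {n : ℕ} (Z₁ Z₂ : Matrix (Fin n ⊕ Fin n) (Fin n) ℝ)
    (h₁ : Z₁.rank = n) (h₂ : Z₂.rank = n)
    (hM : Z₁ᵀ * symplJ n * Z₁ = Z₂ᵀ * symplJ n * Z₂) :
    ∃ S : Matrix (Fin n ⊕ Fin n) (Fin n ⊕ Fin n) ℝ,
      Sᵀ * symplJ n * S = symplJ n ∧ Z₂ = S * Z₁ := by
  obtain ⟨Φ, hΦ, hΦZ⟩ := LinearMap.BilinForm.exists_isometry_comp_eq (f := Z₁.toLin')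
    (g := Z₂.toLin') (isAlt_toBilin'_symplJ n) (nondegenerate_toBilin'_symplJ n)
    (mulVec_injective_of_rank_eq (by rwa [Fintype.card_fin]))
    (mulVec_injective_of_rank_eq (by rwa [Fintype.card_fin]))
    (by rw [toBilin'_comp, toBilin'_comp, hM])
  refine ⟨LinearMap.toMatrix' Φ, toBilin'.injective ?_, toLin'.injective ?_⟩
  · rw [← toBilin'_comp, toLin'_toMatrix', hΦ]
  · rw [toLin'_mul, toLin'_toMatrix', hΦZ]
end

section
/- Let H(Z) = ½⟨Zᵀ𝕁Z, 𝓘⁻¹(Zᵀ𝕁Z)⟩ on M_{2n×n}(ℝ). Then the vector field X_H(Z) = Z·𝓘⁻¹(Zᵀ𝕁Z) is the Hamiltonian vector field of H with respect to ω(X,Y) = tr(Xᵀ𝕁Y): for every Z and every direction Y ∈ M_{2n×n}(ℝ), tr(X_H(Z)ᵀ 𝕁 Y) = d/ds H(Z + sY)|_{s=0}. In block form Z = [Q; P], this says Hamilton's equations for H are Q̇ = QΩ, Ṗ = PΩ with Ω = 𝓘⁻¹(QᵀP − PᵀQ). -/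
open Matrix

/-- The inner product `⟨A, B⟩ = ½ tr(AᵀB)` on `n × n` real matrices. -/
noncomputable def matIP {n : ℕ} (A B : Matrix (Fin n) (Fin n) ℝ) : ℝ :=
  (1 / 2) * Matrix.trace (Aᵀ * B)

/-- The inverse `𝓘⁻¹` of the inertia operator `𝓘(Ω) = ΛΩ + ΩΛ` on skew-symmetric
matrices: entrywise, `(𝓘⁻¹A)ᵢⱼ = Aᵢⱼ / (λᵢ + λⱼ)`. -/
noncomputable def inertiaInv {n : ℕ} (Λ : Fin n → ℝ) (A : Matrix (Fin n) (Fin n) ℝ) :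
    Matrix (Fin n) (Fin n) ℝ :=
  Matrix.of fun i j => A i j / (Λ i + Λ j)

/-- The Hamiltonian `H(Z) = ½⟨Zᵀ𝕁Z, 𝓘⁻¹(Zᵀ𝕁Z)⟩` of the symmetric representation. -/
noncomputable def symRepHam {n : ℕ} (Λ : Fin n → ℝ)
    (Z : Matrix (Fin n ⊕ Fin n) (Fin n) ℝ) : ℝ :=
  (1 / 2) * matIP (Zᵀ * symplJ n * Z) (inertiaInv Λ (Zᵀ * symplJ n * Z))

/-!
Along the line `s ↦ Z + sY` the matrix `A(s) = (Z + sY)ᵀ𝕁(Z + sY)` has `A'(0) = W − Wᵀ` with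
`W = Zᵀ𝕁Y`, because `𝕁ᵀ = −𝕁`. As `𝓘⁻¹` is self-adjoint for `⟨·,·⟩`, the derivative of
`H = ½⟨A, 𝓘⁻¹A⟩` at `0` is `⟨A, 𝓘⁻¹(W − Wᵀ)⟩`; since `A` is skew and `𝓘⁻¹` commutes with
transposition, this is `2⟨A, 𝓘⁻¹W⟩ = 2⟨𝓘⁻¹A, Zᵀ𝕁Y⟩ = tr((Z𝓘⁻¹A)ᵀ𝕁Y)`.
The block form is the identity `[Q; P]ᵀ𝕁[Q; P] = QᵀP − PᵀQ`.
-/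

section Derivatives

variable {l m o : Type*} [Fintype m] {t : ℝ}

theorem hasDerivAt_mul_apply {U : ℝ → Matrix l m ℝ} {V : ℝ → Matrix m o ℝ}
    {U' : Matrix l m ℝ} {V' : Matrix m o ℝ}
    (hU : ∀ i j, HasDerivAt (fun s => U s i j) (U' i j) t)
    (hV : ∀ i j, HasDerivAt (fun s => V s i j) (V' i j) t) (i : l) (j : o) :
    HasDerivAt (fun s => (U s * V s) i j) ((U' * V t + U t * V') i j) t := by
  simp only [Matrix.add_apply, Matrix.mul_apply, ← Finset.sum_add_distrib]
  exact HasDerivAt.fun_sum fun k _ => (hU i k).mul (hV k j)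

theorem hasDerivAt_transpose_mul_mul_add_smul_apply (M : Matrix m m ℝ) (Z Y : Matrix m o ℝ)
    (i j : o) :
    HasDerivAt (fun s => ((Z + s • Y)ᵀ * M * (Z + s • Y)) i j)
      ((Yᵀ * M * (Z + t • Y) + (Z + t • Y)ᵀ * M * Y) i j) t := by
  have hline : ∀ i j, HasDerivAt (fun s : ℝ => (Z + s • Y) i j) (Y i j) t := fun i j => by
    simpa using ((hasDerivAt_id t).mul_const (Y i j)).const_add (Z i j)
  have hM : ∀ i j, HasDerivAt (fun _ : ℝ => M i j) ((0 : Matrix m m ℝ) i j) t := fun i j =>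
    hasDerivAt_const t (M i j)
  have hleft := hasDerivAt_mul_apply (U := fun s => (Z + s • Y)ᵀ) (U' := Yᵀ)
    (fun i j => hline j i) hM
  simpa only [Matrix.mul_zero, add_zero] using hasDerivAt_mul_apply hleft hline i j

end Derivatives

section InertiaForm

variable {n : ℕ} (Λ : Fin n → ℝ)

theorem matIP_eq_sum (A B : Matrix (Fin n) (Fin n) ℝ) :
    matIP A B = (1 / 2) * ∑ i, ∑ j, A i j * B i j := by
  rw [matIP, Matrix.trace, Finset.sum_comm]
  simp [Matrix.mul_apply]

theorem matIP_comm (A B : Matrix (Fin n) (Fin n) ℝ) : matIP A B = matIP B A := by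
  simp only [matIP_eq_sum, mul_comm (A _ _)]

theorem matIP_transpose_left (A B : Matrix (Fin n) (Fin n) ℝ) : matIP Aᵀ B = matIP A Bᵀ := by
  rw [matIP_eq_sum, matIP_eq_sum, Finset.sum_comm]
  rfl

theorem matIP_sub_right (A B C : Matrix (Fin n) (Fin n) ℝ) :
    matIP A (B - C) = matIP A B - matIP A C := by
  simp only [matIP, mul_sub, Matrix.trace_sub]

theorem inertiaInv_sub (A B : Matrix (Fin n) (Fin n) ℝ) :
    inertiaInv Λ (A - B) = inertiaInv Λ A - inertiaInv Λ B := by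
  ext i j
  simp [inertiaInv, sub_div]

theorem inertiaInv_transpose (A : Matrix (Fin n) (Fin n) ℝ) :
    inertiaInv Λ Aᵀ = (inertiaInv Λ A)ᵀ := by
  ext i j
  simp [inertiaInv, add_comm]

theorem matIP_inertiaInv_left (A B : Matrix (Fin n) (Fin n) ℝ) :
    matIP (inertiaInv Λ A) B = matIP A (inertiaInv Λ B) := by
  simp only [matIP_eq_sum, inertiaInv, Matrix.of_apply, div_mul_eq_mul_div, mul_div_assoc]

theorem matIP_inertiaInv_transpose_of_skew {A : Matrix (Fin n) (Fin n) ℝ} (hA : Aᵀ = -A)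
    (B : Matrix (Fin n) (Fin n) ℝ) :
    matIP A (inertiaInv Λ Bᵀ) = -matIP A (inertiaInv Λ B) := by
  rw [inertiaInv_transpose, ← matIP_transpose_left, hA]
  simp [matIP]

theorem hasDerivAt_matIP {U V : ℝ → Matrix (Fin n) (Fin n) ℝ} {U' V' : Matrix (Fin n) (Fin n) ℝ}
    {t : ℝ} (hU : ∀ i j, HasDerivAt (fun s => U s i j) (U' i j) t)
    (hV : ∀ i j, HasDerivAt (fun s => V s i j) (V' i j) t) :
    HasDerivAt (fun s => matIP (U s) (V s)) (matIP U' (V t) + matIP (U t) V') t := by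
  simp only [matIP_eq_sum, ← mul_add, ← Finset.sum_add_distrib]
  exact .const_mul _ <| .fun_sum fun i _ => .fun_sum fun j _ => (hU i j).mul (hV i j)

theorem hasDerivAt_matIP_inertiaInv_self {X : ℝ → Matrix (Fin n) (Fin n) ℝ}
    {X' : Matrix (Fin n) (Fin n) ℝ} {t : ℝ}
    (hX : ∀ i j, HasDerivAt (fun s => X s i j) (X' i j) t) :
    HasDerivAt (fun s => matIP (X s) (inertiaInv Λ (X s)))
      (2 * matIP (X t) (inertiaInv Λ X')) t := by
  convert hasDerivAt_matIP (V := fun s => inertiaInv Λ (X s)) (V' := inertiaInv Λ X') hX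
    fun i j => (hX i j).div_const (Λ i + Λ j) using 1
  rw [matIP_comm, ← matIP_inertiaInv_left]
  ring

end InertiaForm

theorem symplJ_transpose (n : ℕ) : (symplJ n)ᵀ = -symplJ n := by
  simp [symplJ, Matrix.fromBlocks_transpose, Matrix.fromBlocks_neg]

theorem transpose_transpose_mul_mul_of_skew {m k : Type*} [Fintype m] {M : Matrix m m ℝ}
    (hM : Mᵀ = -M) (Z Y : Matrix m k ℝ) : (Zᵀ * M * Y)ᵀ = -(Yᵀ * M * Z) := by
  simp [Matrix.transpose_mul, hM, Matrix.mul_assoc]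

theorem fromRows_transpose_mul_symplJ_mul_fromRows {n : ℕ} (Q P : Matrix (Fin n) (Fin n) ℝ) :
    (Matrix.fromRows Q P)ᵀ * symplJ n * Matrix.fromRows Q P = Qᵀ * P - Pᵀ * Q := by
  rw [symplJ, transpose_fromRows, fromCols_mul_fromBlocks, fromCols_mul_fromRows]
  simp [sub_eq_add_neg, add_comm]

theorem hasDerivAt_symRepHam_add_smul {n : ℕ} (Λ : Fin n → ℝ)
    (Z Y : Matrix (Fin n ⊕ Fin n) (Fin n) ℝ) :
    HasDerivAt (fun s : ℝ => symRepHam Λ (Z + s • Y))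
      (Matrix.trace ((Z * inertiaInv Λ (Zᵀ * symplJ n * Z))ᵀ * symplJ n * Y)) 0 := by
  set A := Zᵀ * symplJ n * Z
  set W := Zᵀ * symplJ n * Y
  have hA : Aᵀ = -A := transpose_transpose_mul_mul_of_skew (symplJ_transpose n) Z Z
  have hYZ : Yᵀ * symplJ n * Z = -Wᵀ := by
    rw [transpose_transpose_mul_mul_of_skew (symplJ_transpose n), neg_neg]
  have hH := (hasDerivAt_matIP_inertiaInv_self Λ
    (hasDerivAt_transpose_mul_mul_add_smul_apply (symplJ n) Z Y (t := 0))).const_mul (1 / 2)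
  have htrace : Matrix.trace ((Z * inertiaInv Λ A)ᵀ * symplJ n * Y)
      = 2 * matIP A (inertiaInv Λ W) := by
    rw [Matrix.transpose_mul, Matrix.mul_assoc, Matrix.mul_assoc, ← Matrix.mul_assoc Zᵀ,
      ← matIP_inertiaInv_left, matIP]
    ring
  refine hH.congr_deriv ?_
  rw [htrace, zero_smul, add_zero, hYZ, neg_add_eq_sub, inertiaInv_sub, matIP_sub_right,
    matIP_inertiaInv_transpose_of_skew Λ hA]
  ring

theorem hamiltonian_vector_field_of_symmetric_representation_general
    {n : ℕ} (Λ : Fin n → ℝ) :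
    (∀ Z Y : Matrix (Fin n ⊕ Fin n) (Fin n) ℝ,
      HasDerivAt (fun s : ℝ => symRepHam Λ (Z + s • Y))
        (Matrix.trace ((Z * inertiaInv Λ (Zᵀ * symplJ n * Z))ᵀ * symplJ n * Y)) 0) ∧
    (∀ Q P : Matrix (Fin n) (Fin n) ℝ,
      Matrix.fromRows Q P
          * inertiaInv Λ ((Matrix.fromRows Q P)ᵀ * symplJ n * Matrix.fromRows Q P)
        = Matrix.fromRows (Q * inertiaInv Λ (Qᵀ * P - Pᵀ * Q))
            (P * inertiaInv Λ (Qᵀ * P - Pᵀ * Q))) :=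
  ⟨hasDerivAt_symRepHam_add_smul Λ, fun Q P => by
    rw [fromRows_transpose_mul_symplJ_mul_fromRows, fromRows_mul]⟩

/-- The vector field `X_H(Z) = Z·𝓘⁻¹(Zᵀ𝕁Z)` is the Hamiltonian vector
field of `H(Z) = ½⟨Zᵀ𝕁Z, 𝓘⁻¹(Zᵀ𝕁Z)⟩` for `ω(X,Y) = tr(Xᵀ𝕁Y)`: for all `Z` and all
directions `Y`, `tr(X_H(Z)ᵀ𝕁Y) = d/ds H(Z + sY)|₀`. In block form `Z = [Q; P]` this says
Hamilton's equations are `Q̇ = QΩ`, `Ṗ = PΩ` with `Ω = 𝓘⁻¹(QᵀP − PᵀQ)`. -/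
theorem hamiltonian_vector_field_of_symmetric_representation
    {n : ℕ} (Λ : Fin n → ℝ) (hΛ : ∀ i j : Fin n, i ≠ j → 0 < Λ i + Λ j) :
    (∀ Z Y : Matrix (Fin n ⊕ Fin n) (Fin n) ℝ,
      HasDerivAt (fun s : ℝ => symRepHam Λ (Z + s • Y))
        (Matrix.trace ((Z * inertiaInv Λ (Zᵀ * symplJ n * Z))ᵀ * symplJ n * Y)) 0) ∧
    (∀ Q P : Matrix (Fin n) (Fin n) ℝ,
      Matrix.fromRows Q P
          * inertiaInv Λ ((Matrix.fromRows Q P)ᵀ * symplJ n * Matrix.fromRows Q P)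
        = Matrix.fromRows (Q * inertiaInv Λ (Qᵀ * P - Pᵀ * Q))
            (P * inertiaInv Λ (Qᵀ * P - Pᵀ * Q))) :=
  hamiltonian_vector_field_of_symmetric_representation_general Λ
end
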